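/- Let T be a tree, P a longest path in T, and P* a central path of T of minimum length (i.e., a path of minimum eccentricity with fewest edges among such paths). Then V(P*) ⊆ V(P). -/

import Mathlib

/-
Write `SameBranch g x y` when `g` is not between `x` and `y`; in a tree this is transitive, and a
path meets at most two branches at any vertex.

A longest path `P = a ⋯ b` is central: if a vertex `z` were farther than `ecc Q` from `P`, for some
path `Q`, then its gate `g` on `P` would separate `a`, `b`, `z` pairwise, while `Q`, coming within
`ecc Q` of each of them, would meet three branches at `g`.

If the shortest central path `P* = c ⋯ d` has an edge, minimality yields a vertex `w` covered only
by `d` and a vertex `u` covered only by `c`. If `d ∉ P`, then `c`, `u`, their nearest vertices on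
`P` and `w` all lie in one branch at `d`, although `d` separates `c` from `w`. So `c, d ∈ P`, and
`P* ⊆ P` because paths in a tree are convex. If `P*` is a single vertex off `P`, it is at distance
more than `⌈|P|/2⌉` from `a` or `b`, whereas the middle vertex of `P` has eccentricity at most
`⌈|P|/2⌉`.
-/

open SimpleGraph

variable {V : Type*} [Fintype V] [DecidableEq V]

/-- Distance from a vertex `u` to the vertex set of a walk `P`. -/
noncomputable def walkDist (G : SimpleGraph V) {a b : V} (P : G.Walk a b) (u : V) : ℕ :=
  P.support.toFinset.inf' ⟨a, List.mem_toFinset.mpr P.start_mem_support⟩ (fun x => G.dist u x)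

/-- Eccentricity of a walk: max distance from any vertex of `G` to the walk. -/
noncomputable def eccW (G : SimpleGraph V) {a b : V} (P : G.Walk a b) : ℕ :=
  Finset.univ.sup (walkDist G P)

/-- Path eccentricity of a graph. -/
noncomputable def pe (G : SimpleGraph V) : ℕ :=
  sInf {m | ∃ (a b : V) (P : G.Walk a b), P.IsPath ∧ eccW G P = m}

/-- `P` is a longest path in `G`. -/
def IsLongestPath (G : SimpleGraph V) {a b : V} (P : G.Walk a b) : Prop :=
  P.IsPath ∧ ∀ (c d : V) (Q : G.Walk c d), Q.IsPath → Q.length ≤ P.length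

/-- `G` is `k`-connected. -/
def KConnected (k : ℕ) (G : SimpleGraph V) : Prop :=
  k + 1 ≤ Fintype.card V ∧
    ∀ S : Finset V, S.card < k → (G.induce ((↑S : Set V)ᶜ)).Connected

namespace SimpleGraph

section Geodesics

omit [Fintype V] [DecidableEq V]
variable {G : SimpleGraph V}

theorem Walk.IsPath.append {u v w : V} {p : G.Walk u v} {q : G.Walk v w} (hp : p.IsPath)
    (hq : q.IsPath) (h : ∀ x ∈ p.support, x ∈ q.support → x = v) : (p.append q).IsPath := by
  rw [Walk.isPath_def, Walk.support_append, List.nodup_append]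
  refine ⟨hp.support_nodup, hq.support_nodup.sublist (List.tail_sublist _), ?_⟩
  rintro x hx _ hy rfl
  obtain rfl := h x hx (List.mem_of_mem_tail hy)
  have hnodup := hq.support_nodup
  rw [← Walk.cons_tail_support] at hnodup
  exact (List.nodup_cons.1 hnodup).1 hy

theorem Walk.dist_getVert_getVert_of_length_eq_dist {u v : V} {p : G.Walk u v}
    (hp : p.length = G.dist u v) {i j : ℕ} (hi : i ≤ p.length) (hj : j ≤ p.length) :
    G.dist (p.getVert i) (p.getVert j) = max i j - min i j := by
  wlog hij : i ≤ j generalizing i j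
  · rw [dist_comm, this hj hi (by omega), max_comm, min_comm]
  have hsub : ((p.drop i).take (j - i)).IsSubwalk p :=
    (Walk.isSubwalk_take _ _).trans (Walk.isSubwalk_drop _ _)
  have h := length_eq_dist_of_subwalk hp hsub
  rw [Walk.take_length, Walk.drop_length, Walk.drop_getVert, Nat.add_sub_cancel' hij] at h
  rw [← h]
  omega

/-- In a tree, this says that `x` and `y` lie in the same component of `G - g`. -/
def SameBranch (G : SimpleGraph V) (g x y : V) : Prop :=
  G.dist x y < G.dist x g + G.dist g y

theorem SameBranch.symm {g x y : V} (h : G.SameBranch g x y) :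
    G.SameBranch g y x := by
  rw [SameBranch, dist_comm, add_comm, dist_comm (u := g), dist_comm (u := y)]
  exact h

end Geodesics

namespace IsTree

variable {T : SimpleGraph V}

section Metric

omit [Fintype V] [DecidableEq V]

theorem length_eq_dist (hT : T.IsTree) {u v : V} {p : T.Walk u v} (hp : p.IsPath) :
    p.length = T.dist u v := by
  obtain ⟨q, hq, hlen⟩ := hT.connected.exists_path_of_dist u v
  rw [(hT.existsUnique_path u v).unique hp hq, hlen]

theorem dist_getVert_getVert (hT : T.IsTree) {u v : V} {p : T.Walk u v} (hp : p.IsPath)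
    {i j : ℕ} (hi : i ≤ p.length) (hj : j ≤ p.length) :
    T.dist (p.getVert i) (p.getVert j) = max i j - min i j :=
  Walk.dist_getVert_getVert_of_length_eq_dist (hT.length_eq_dist hp) hi hj

theorem dist_start_getVert (hT : T.IsTree) {u v : V} {p : T.Walk u v} (hp : p.IsPath) {i : ℕ}
    (hi : i ≤ p.length) : T.dist u (p.getVert i) = i := by
  simpa using hT.dist_getVert_getVert hp (Nat.zero_le _) hi

theorem dist_getVert_end (hT : T.IsTree) {u v : V} {p : T.Walk u v} (hp : p.IsPath) {i : ℕ}
    (hi : i ≤ p.length) : T.dist (p.getVert i) v = p.length - i := by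
  simpa [hi] using hT.dist_getVert_getVert hp hi le_rfl

theorem mem_support_iff_dist_add_dist_eq (hT : T.IsTree) {u v m : V} {p : T.Walk u v}
    (hp : p.IsPath) : m ∈ p.support ↔ T.dist u m + T.dist m v = T.dist u v := by
  constructor
  · intro hm
    obtain ⟨i, rfl, hi⟩ := Walk.mem_support_iff_exists_getVert.1 hm
    rw [hT.dist_start_getVert hp hi, hT.dist_getVert_end hp hi, ← hT.length_eq_dist hp]
    omega
  · intro h
    obtain ⟨s, -, hs⟩ := hT.connected.exists_path_of_dist u m
    obtain ⟨r, -, hr⟩ := hT.connected.exists_path_of_dist m v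
    have hsr : (s.append r).IsPath :=
      (s.append r).isPath_of_length_eq_dist (by rw [Walk.length_append, hs, hr, h])
    rw [(hT.existsUnique_path u v).unique hp hsr]
    exact (Walk.mem_support_append_iff _ _).2 (Or.inl s.end_mem_support)

theorem support_subset_support (hT : T.IsTree) {u v x y : V} {p : T.Walk u v} {q : T.Walk x y}
    (hp : p.IsPath) (hq : q.IsPath) (hx : x ∈ p.support) (hy : y ∈ p.support) :
    q.support ⊆ p.support := by
  -- With `x = p_i` and `y = p_j`, `i ≤ j`: `d(u, w) + d(w, v) ≤ i + d(x, y) + (|p| - j) = |p|`.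
  intro w hw
  rw [hT.mem_support_iff_dist_add_dist_eq hq] at hw
  rw [hT.mem_support_iff_dist_add_dist_eq hp]
  obtain ⟨i, rfl, hi⟩ := Walk.mem_support_iff_exists_getVert.1 hx
  obtain ⟨j, rfl, hj⟩ := Walk.mem_support_iff_exists_getVert.1 hy
  have hij := hT.dist_getVert_getVert hp hi hj
  have hui := hT.dist_start_getVert hp hi
  have huj := hT.dist_start_getVert hp hj
  have hiv := hT.dist_getVert_end hp hi
  have hjv := hT.dist_getVert_end hp hj
  have huv := hT.length_eq_dist hp
  have := hT.connected.dist_triangle (u := u) (v := p.getVert i) (w := w)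
  have := hT.connected.dist_triangle (u := u) (v := p.getVert j) (w := w)
  have := hT.connected.dist_triangle (u := w) (v := p.getVert i) (w := v)
  have := hT.connected.dist_triangle (u := w) (v := p.getVert j) (w := v)
  have := hT.connected.dist_triangle (u := u) (v := w) (w := v)
  have := dist_comm (G := T) (u := w) (v := p.getVert i)
  have := dist_comm (G := T) (u := w) (v := p.getVert j)
  omega

theorem dist_eq_dist_add_dist_of_forall_le (hT : T.IsTree) {u v z g q : V} {p : T.Walk u v}
    (hp : p.IsPath) (hg : g ∈ p.support) (hmin : ∀ x ∈ p.support, T.dist z g ≤ T.dist z x)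
    (hq : q ∈ p.support) : T.dist z q = T.dist z g + T.dist g q := by
  obtain ⟨s, hs, hslen⟩ := hT.connected.exists_path_of_dist z g
  obtain ⟨r, hr, hrlen⟩ := hT.connected.exists_path_of_dist g q
  have hrp := hT.support_subset_support hp hr hg hq
  -- By minimality of `g`, the shortest `z`–`g` path meets `p`, hence `r`, only at `g`.
  have hsr : (s.append r).IsPath := hs.append hr fun x hxs hxr => by
    have hzx := (hT.mem_support_iff_dist_add_dist_eq hs).1 hxs
    have := hmin x (hrp hxr)
    exact hT.connected.dist_eq_zero_iff.1 (by omega)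
  rw [← hT.length_eq_dist hsr, Walk.length_append, hslen, hrlen]

theorem sameBranch_iff_not_mem_support (hT : T.IsTree) {g x y : V} {p : T.Walk x y}
    (hp : p.IsPath) : T.SameBranch g x y ↔ g ∉ p.support := by
  rw [hT.mem_support_iff_dist_add_dist_eq hp, SameBranch]
  have := hT.connected.dist_triangle (u := x) (v := g) (w := y)
  omega

theorem sameBranch_of_not_mem_support (hT : T.IsTree) {u v g x y : V} {p : T.Walk u v}
    (hp : p.IsPath) (hg : g ∉ p.support) (hx : x ∈ p.support) (hy : y ∈ p.support) :
    T.SameBranch g x y := by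
  obtain ⟨q, hq, -⟩ := hT.connected.exists_path_of_dist x y
  exact (hT.sameBranch_iff_not_mem_support hq).2 fun hgq =>
    hg (hT.support_subset_support hp hq hx hy hgq)

/-- A path meets at most two branches at `g`. -/
theorem sameBranch_of_mem_support (hT : T.IsTree) {u v g q₁ q₂ q₃ : V} {p : T.Walk u v}
    (hp : p.IsPath) (h₁ : q₁ ∈ p.support) (h₂ : q₂ ∈ p.support) (h₃ : q₃ ∈ p.support)
    (hg₁ : q₁ ≠ g) (hg₂ : q₂ ≠ g) (hg₃ : q₃ ≠ g) :
    T.SameBranch g q₁ q₂ ∨ T.SameBranch g q₁ q₃ ∨ T.SameBranch g q₂ q₃ := by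
  by_contra! h
  obtain ⟨h₁₂, h₁₃, h₂₃⟩ := h
  have hg : g ∈ p.support := by
    by_contra hg
    exact h₁₂ (hT.sameBranch_of_not_mem_support hp hg h₁ h₂)
  obtain ⟨k, rfl, hk⟩ := Walk.mem_support_iff_exists_getVert.1 hg
  obtain ⟨i₁, rfl, hi₁⟩ := Walk.mem_support_iff_exists_getVert.1 h₁
  obtain ⟨i₂, rfl, hi₂⟩ := Walk.mem_support_iff_exists_getVert.1 h₂
  obtain ⟨i₃, rfl, hi₃⟩ := Walk.mem_support_iff_exists_getVert.1 h₃
  have hk₁ : i₁ ≠ k := by rintro rfl; exact hg₁ rfl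
  have hk₂ : i₂ ≠ k := by rintro rfl; exact hg₂ rfl
  have hk₃ : i₃ ≠ k := by rintro rfl; exact hg₃ rfl
  -- Along `p`, `g = p_k` separates `p_i` from `p_j` exactly when `k` lies between `i` and `j`.
  simp only [SameBranch, not_lt, hT.dist_getVert_getVert hp, *] at h₁₂ h₁₃ h₂₃
  omega

end Metric

omit [Fintype V] in
theorem exists_gate (hT : T.IsTree) {u v : V} {p : T.Walk u v} (hp : p.IsPath) (z : V) :
    ∃ g ∈ p.support, ∀ q ∈ p.support, T.dist z q = T.dist z g + T.dist g q := by
  obtain ⟨g, hg, hmin⟩ :=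
    p.support.toFinset.exists_min_image (T.dist z) ⟨u, by simp⟩
  rw [List.mem_toFinset] at hg
  exact ⟨g, hg, fun q => hT.dist_eq_dist_add_dist_of_forall_le hp hg
    fun x hx => hmin x (List.mem_toFinset.2 hx)⟩

omit [Fintype V] in
theorem sameBranch_trans (hT : T.IsTree) {g x y z : V} (hxy : T.SameBranch g x y)
    (hyz : T.SameBranch g y z) : T.SameBranch g x z := by
  obtain ⟨p, hp, -⟩ := hT.connected.exists_path_of_dist x y
  obtain ⟨q, hq, -⟩ := hT.connected.exists_path_of_dist y z
  rw [hT.sameBranch_iff_not_mem_support (p.append q).bypass_isPath]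
  intro hg
  rcases (Walk.mem_support_append_iff _ _).1 ((p.append q).support_bypass_subset_support hg)
    with hgp | hgq
  · exact (hT.sameBranch_iff_not_mem_support hp).1 hxy hgp
  · exact (hT.sameBranch_iff_not_mem_support hq).1 hyz hgq

end IsTree

end SimpleGraph

section PathEccentricity

variable {G : SimpleGraph V}

omit [Fintype V] in
theorem walkDist_le_iff {a b u : V} {P : G.Walk a b} {n : ℕ} :
    walkDist G P u ≤ n ↔ ∃ q ∈ P.support, G.dist u q ≤ n := by
  simp only [walkDist]
  exact (Finset.inf'_le_iff _).trans (by simp)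

omit [Fintype V] in
theorem lt_walkDist_iff {a b u : V} {P : G.Walk a b} {n : ℕ} :
    n < walkDist G P u ↔ ∀ q ∈ P.support, n < G.dist u q := by
  simp only [walkDist]
  exact (Finset.lt_inf'_iff _).trans (by simp)

omit [Fintype V] in
theorem walkDist_nil {u v : V} : walkDist G (Walk.nil : G.Walk v v) u = G.dist u v := by
  simp [walkDist]

omit [Fintype V] in
theorem walkDist_reverse {a b u : V} (P : G.Walk a b) :
    walkDist G P.reverse u = walkDist G P u :=
  eq_of_forall_ge_iff fun n => by simp [walkDist_le_iff]

theorem walkDist_le_eccW {a b : V} (P : G.Walk a b) (u : V) : walkDist G P u ≤ eccW G P :=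
  Finset.le_sup (Finset.mem_univ u)

theorem eccW_le_iff {a b : V} {P : G.Walk a b} {n : ℕ} :
    eccW G P ≤ n ↔ ∀ u, walkDist G P u ≤ n := by
  simp [eccW]

theorem lt_eccW_iff {a b : V} {P : G.Walk a b} {n : ℕ} :
    n < eccW G P ↔ ∃ u, n < walkDist G P u := by
  simp [eccW, Finset.lt_sup_iff]

theorem eccW_reverse {a b : V} (P : G.Walk a b) : eccW G P.reverse = eccW G P := by
  simp only [eccW]
  congr 1
  exact funext fun u => walkDist_reverse P

theorem pe_le_eccW {a b : V} {P : G.Walk a b} (hP : P.IsPath) : pe G ≤ eccW G P :=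
  Nat.sInf_le ⟨a, b, P, hP, rfl⟩

end PathEccentricity

theorem SimpleGraph.IsTree.lt_eccW_nil_of_not_mem_support {T : SimpleGraph V} (hT : T.IsTree)
    {a b c : V} {P : T.Walk a b} (hP : P.IsPath) (hc : c ∉ P.support) :
    P.length - P.length / 2 < eccW T (Walk.nil : T.Walk c c) := by
  obtain ⟨g, hg, hgate⟩ := hT.exists_gate hP c
  have hcg : 0 < T.dist c g := hT.connected.pos_dist_of_ne fun h => hc (h ▸ hg)
  have hagb := (hT.mem_support_iff_dist_add_dist_eq hP).1 hg
  have hab := hT.length_eq_dist hP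
  have hca := hgate a P.start_mem_support
  have hcb := hgate b P.end_mem_support
  have hac := walkDist_nil (G := T) (u := a) (v := c) ▸ walkDist_le_eccW Walk.nil a
  have hbc := walkDist_nil (G := T) (u := b) (v := c) ▸ walkDist_le_eccW Walk.nil b
  have : T.dist g a = T.dist a g := dist_comm
  have : T.dist a c = T.dist c a := dist_comm
  have : T.dist b c = T.dist c b := dist_comm
  omega

namespace IsLongestPath

variable {T : SimpleGraph V} {a b : V} {P : T.Walk a b}

omit [Fintype V] [DecidableEq V] in
theorem dist_le (hT : T.IsTree) (hP : IsLongestPath T P) (x y : V) : T.dist x y ≤ P.length := by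
  obtain ⟨q, hq, hlen⟩ := hT.connected.exists_path_of_dist x y
  exact hlen ▸ hP.2 x y q hq

theorem walkDist_le_eccW_of_isPath (hT : T.IsTree) (hP : IsLongestPath T P) {c d : V}
    {Q : T.Walk c d} (hQ : Q.IsPath) (z : V) : walkDist T P z ≤ eccW T Q := by
  by_contra! hfar
  obtain ⟨g, hg, hgate⟩ := hT.exists_gate hP.1 z
  have hzg := lt_walkDist_iff.1 hfar g hg
  have hagb := (hT.mem_support_iff_dist_add_dist_eq hP.1).1 hg
  have hab := hT.length_eq_dist hP.1
  have hza := hgate a P.start_mem_support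
  have hzb := hgate b P.end_mem_support
  have := hP.dist_le hT z a
  have := hP.dist_le hT z b
  have hga : T.dist g a = T.dist a g := SimpleGraph.dist_comm
  have hgb : T.dist g b = T.dist b g := SimpleGraph.dist_comm
  have hbranch : ∀ x, eccW T Q < T.dist x g → ∃ q ∈ Q.support, q ≠ g ∧ T.SameBranch g x q := by
    intro x hx
    obtain ⟨q, hq, hxq⟩ := walkDist_le_iff.1 (walkDist_le_eccW Q x)
    refine ⟨q, hq, ?_, by unfold SameBranch; omega⟩
    rintro rfl
    omega
  obtain ⟨qa, hqa, hqag, ha⟩ := hbranch a (by omega)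
  obtain ⟨qb, hqb, hqbg, hb⟩ := hbranch b (by omega)
  obtain ⟨qz, hqz, hqzg, hz⟩ := hbranch z hzg
  have hsep : ∀ {x y}, T.dist x y = T.dist x g + T.dist g y → ¬T.SameBranch g x y := by
    intro x y h
    simp [SameBranch, h]
  have hza' : T.dist a z = T.dist a g + T.dist g z := by
    rw [SimpleGraph.dist_comm, hza, SimpleGraph.dist_comm (u := z), add_comm, hga]
  have hzb' : T.dist b z = T.dist b g + T.dist g z := by
    rw [SimpleGraph.dist_comm, hzb, SimpleGraph.dist_comm (u := z), add_comm, hgb]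
  rcases hT.sameBranch_of_mem_support hQ hqa hqb hqz hqag hqbg hqzg with h | h | h
  · exact hsep hagb.symm (hT.sameBranch_trans ha (hT.sameBranch_trans h hb.symm))
  · exact hsep hza' (hT.sameBranch_trans ha (hT.sameBranch_trans h hz.symm))
  · exact hsep hzb' (hT.sameBranch_trans hb (hT.sameBranch_trans h hz.symm))

theorem eccW_nil_getVert_le (hT : T.IsTree) (hP : IsLongestPath T P) :
    eccW T (Walk.nil : T.Walk (P.getVert (P.length - P.length / 2)) _) ≤
      P.length - P.length / 2 := by
  have hm : P.length - P.length / 2 ≤ P.length := Nat.sub_le _ _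
  refine eccW_le_iff.2 fun x => ?_
  rw [walkDist_nil]
  obtain ⟨g, hg, hgate⟩ := hT.exists_gate hP.1 x
  obtain ⟨j, rfl, hj⟩ := Walk.mem_support_iff_exists_getVert.1 hg
  rw [hgate _ (P.getVert_mem_support _), hT.dist_getVert_getVert hP.1 hj hm]
  have hxa := hgate a P.start_mem_support
  have hxb := hgate b P.end_mem_support
  have : T.dist (P.getVert j) a = j := by rw [dist_comm, hT.dist_start_getVert hP.1 hj]
  have := hT.dist_getVert_end hP.1 hj
  have := hP.dist_le hT x a
  have := hP.dist_le hT x b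
  omega

theorem mem_support_of_eccW_nil_eq_pe (hT : T.IsTree) (hP : IsLongestPath T P) {c : V}
    (hc : eccW T (Walk.nil : T.Walk c c) = pe T) : c ∈ P.support := by
  by_contra hcP
  have := hT.lt_eccW_nil_of_not_mem_support hP.1 hcP
  have := hP.eccW_nil_getVert_le hT
  have := pe_le_eccW (G := T) (Walk.IsPath.nil (u := P.getVert (P.length - P.length / 2)))
  omega

end IsLongestPath

def IsShortestCentralPath (G : SimpleGraph V) {c d : V} (P : G.Walk c d) : Prop :=
  P.IsPath ∧ eccW G P = pe G ∧
    ∀ (e f : V) (Q : G.Walk e f), Q.IsPath → eccW G Q = pe G → P.length ≤ Q.length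

namespace IsShortestCentralPath

variable {G : SimpleGraph V} {c d : V} {P : G.Walk c d}

theorem reverse (hP : IsShortestCentralPath G P) : IsShortestCentralPath G P.reverse :=
  ⟨hP.1.reverse, (eccW_reverse P).trans hP.2.1,
    fun e f Q hQ hQe => (P.length_reverse).trans_le (hP.2.2 e f Q hQ hQe)⟩

theorem pe_lt_eccW (hP : IsShortestCentralPath G P) {e f : V} {Q : G.Walk e f}
    (hQ : Q.IsPath) (hlen : Q.length < P.length) : pe G < eccW G Q :=
  (pe_le_eccW hQ).lt_of_ne fun h => (hP.2.2 e f Q hQ h.symm).not_gt hlen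

theorem exists_near_end_only (hP : IsShortestCentralPath G P) (hnil : ¬P.Nil) :
    ∃ w, G.dist w d ≤ pe G ∧ ∀ q ∈ P.support, q ≠ d → pe G < G.dist w q := by
  have hlen : P.dropLast.length < P.length := by
    rw [Walk.length_dropLast]
    exact Nat.sub_lt (Walk.not_nil_iff_lt_length.1 hnil) one_pos
  obtain ⟨w, hw⟩ := lt_eccW_iff.1 (hP.pe_lt_eccW hP.1.dropLast hlen)
  have hfar : ∀ q ∈ P.support, q ≠ d → pe G < G.dist w q := by
    intro q hq hqd
    refine lt_walkDist_iff.1 hw q ?_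
    rw [Walk.support_dropLast hnil]
    rw [← P.dropLast_support_concat, List.mem_append, List.mem_singleton] at hq
    exact hq.resolve_right hqd
  obtain ⟨q, hq, hwq⟩ := walkDist_le_iff.1 (hP.2.1 ▸ walkDist_le_eccW P w)
  obtain rfl : q = d := by
    by_contra hqd
    exact (hfar q hq hqd).not_ge hwq
  exact ⟨w, hwq, hfar⟩

end IsShortestCentralPath

theorem IsShortestCentralPath.end_mem_support {T : SimpleGraph V} (hT : T.IsTree) {c d : V}
    {Ps : T.Walk c d} (hPs : IsShortestCentralPath T Ps) (hnil : ¬Ps.Nil) {a b : V}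
    {P : T.Walk a b} (hP : IsLongestPath T P) : d ∈ P.support := by
  by_contra hdP
  obtain ⟨w, hwd, hw⟩ := hPs.exists_near_end_only hnil
  obtain ⟨u, huc, hu⟩ := hPs.reverse.exists_near_end_only (mt Walk.nil_reverse.1 hnil)
  have hud : pe T < T.dist u d :=
    hu d (by simp) fun h => hnil (hPs.1.nil_iff_eq.2 h.symm)
  have hgate : ∀ q ∈ Ps.support, T.dist w q = T.dist w d + T.dist d q := by
    refine fun q => hT.dist_eq_dist_add_dist_of_forall_le hPs.1 Ps.end_mem_support fun x hx => ?_
    by_cases hxd : x = d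
    · rw [hxd]
    · exact hwd.trans (hw x hx hxd).le
  have hwd' : pe T ≤ T.dist w d := by
    have hadj := Walk.adj_penultimate hnil
    have hpen := Ps.getVert_mem_support (Ps.length - 1)
    have hwpen := hgate _ hpen
    have := hw _ hpen hadj.ne
    rw [dist_eq_one_iff_adj.2 hadj.symm] at hwpen
    omega
  obtain ⟨pu, hpu, hupu⟩ :=
    walkDist_le_iff.1 (hPs.2.1 ▸ hP.walkDist_le_eccW_of_isPath hT hPs.1 u)
  obtain ⟨pw, hpw, hwpw⟩ :=
    walkDist_le_iff.1 (hPs.2.1 ▸ hP.walkDist_le_eccW_of_isPath hT hPs.1 w)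
  have hpwd : 0 < T.dist pw d := hT.connected.pos_dist_of_ne fun h => hdP (h ▸ hpw)
  have hwc := hgate c Ps.start_mem_support
  have hcu : T.SameBranch d c u := by
    rw [SameBranch, dist_comm, dist_comm (u := d) (v := u)]; omega
  have hupu' : T.SameBranch d u pu := by
    rw [SameBranch]; omega
  have hpupw : T.SameBranch d pu pw := hT.sameBranch_of_not_mem_support hP.1 hdP hpu hpw
  have hpww : T.SameBranch d pw w := by
    rw [SameBranch, dist_comm, dist_comm (u := d) (v := w)]; omega
  have hcw := hT.sameBranch_trans hcu (hT.sameBranch_trans hupu' (hT.sameBranch_trans hpupw hpww))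
  rw [SameBranch, dist_comm, hwc, dist_comm (u := w), add_comm, dist_comm (u := d) (v := c)] at hcw
  exact lt_irrefl _ hcw

theorem stmt11 (T : SimpleGraph V) (hT : T.IsTree)
    {a b c d : V} (P : T.Walk a b) (hP : IsLongestPath T P)
    (Pstar : T.Walk c d) (hPstar : Pstar.IsPath)
    (hcentral : eccW T Pstar = pe T)
    (hmin : ∀ (e f : V) (Q : T.Walk e f), Q.IsPath → eccW T Q = pe T →
      Pstar.length ≤ Q.length) :
    ∀ v ∈ Pstar.support, v ∈ P.support := by
  have hPs : IsShortestCentralPath T Pstar := ⟨hPstar, hcentral, hmin⟩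
  intro v hv
  by_cases hnil : Pstar.Nil
  · obtain rfl := hnil.eq
    obtain rfl := Walk.eq_nil_iff_nil.2 hnil
    obtain rfl : v = c := by simpa using hv
    exact hP.mem_support_of_eccW_nil_eq_pe hT hcentral
  · have hd := hPs.end_mem_support hT hnil hP
    have hc := hPs.reverse.end_mem_support hT (mt Walk.nil_reverse.1 hnil) hP
    exact hT.support_subset_support hP.1 hPstar hc hd hv
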